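/- Fix q ∈ ℂ with q ≠ 0 and q not a root of unity, and c ∈ ℂ. Let (e₋₁, e₁, A) be a Podleś representation with parameter c on a finite-dimensional complex vector space V. If c ≠ c(n) = −1/(qⁿ + q⁻ⁿ)² for every integer n ≥ 1, then A is nilpotent. -/

import Mathlib

/-- A Podleś representation with parameter `c` on a complex vector space:
endomorphisms `e₋₁, e₁, A` satisfying `e₋₁∘e₁ = A − A² + c·id`,
`e₁∘e₋₁ = q²·A − q⁴·A² + c·id`, `e₁∘A = q²·A∘e₁` and `e₋₁∘A = q⁻²·A∘e₋₁`. -/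
def PodlesRep (q c : ℂ) {V : Type*} [AddCommGroup V] [Module ℂ V]
    (em e1 A : Module.End ℂ V) : Prop :=
  em * e1 = A - A ^ 2 + c • (1 : Module.End ℂ V) ∧
  e1 * em = q ^ 2 • A - q ^ 4 • A ^ 2 + c • (1 : Module.End ℂ V) ∧
  e1 * A = q ^ 2 • (A * e1) ∧
  em * A = (q ^ 2)⁻¹ • (A * em)

/-!
If `A` had an eigenvalue `μ ≠ 0`, then, since `e₁` multiplies eigenvalues of `A` by `q⁻²`, `q` is
not a root of unity and `A` has only finitely many eigenvalues, applying `e₁` repeatedly to a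
`μ`-eigenvector ends at an eigenvector killed by `e₁`, of eigenvalue `l ≠ 0`; likewise `e₋₁`
(multiplying eigenvalues by `q²`) leads from there to an eigenvector killed by `e₋₁`, of
eigenvalue `q²ⁿl`. The relations for `e₋₁e₁` and `e₁e₋₁` make `l` and `x²l`, with `x = qⁿ⁺¹`,
two distinct roots of `t - t² + c`, so `l + x²l = 1` and `c = -x²l² = -1/(x + x⁻¹)²`.
-/

lemma pow_injective_of_ne_zero_of_not_isOfFinOrder {G₀ : Type*} [GroupWithZero G₀] {r : G₀}
    (h0 : r ≠ 0) (hr : ¬IsOfFinOrder r) : Function.Injective (r ^ · : ℕ → G₀) := by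
  rw [← Units.val_mk0 h0, Units.isOfFinOrder_val, ← injective_pow_iff_not_isOfFinOrder] at hr
  exact fun a b h => hr (Units.ext (by simpa using h))

lemma not_isOfFinOrder_inv₀ {G₀ : Type*} [GroupWithZero G₀] {r : G₀} (hr : ¬IsOfFinOrder r) :
    ¬IsOfFinOrder r⁻¹ := by
  simp only [isOfFinOrder_iff_pow_eq_one, inv_pow, inv_eq_one] at hr ⊢
  exact hr

namespace Module.End

variable {K V : Type*} [Field K] [AddCommGroup V] [Module K V]

lemma isNilpotent_of_forall_hasEigenvalue_eq_zero [IsAlgClosed K] [FiniteDimensional K V]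
    {A : End K V} (h : ∀ μ, A.HasEigenvalue μ → μ = 0) : IsNilpotent A := by
  have hroots : (minpoly K A).roots = Multiset.replicate (minpoly K A).roots.card 0 :=
    Multiset.eq_replicate_card.2 fun μ hμ =>
      h μ (hasEigenvalue_iff_isRoot.2 (Polynomial.isRoot_of_mem_roots hμ))
  refine ⟨(minpoly K A).roots.card, ?_⟩
  have := minpoly.aeval K A
  rw [(IsAlgClosed.splits _).eq_prod_roots_of_monic (minpoly.monic (.of_finite K A)), hroots,
    Multiset.map_replicate, Multiset.prod_replicate] at this
  simpa using this

lemma apply_mem_eigenspace_of_mul_eq_smul_mul {A T : End K V} {r μ : K} (h : A * T = r • (T * A))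
    {v : V} (hv : v ∈ A.eigenspace μ) : T v ∈ A.eigenspace (r * μ) := by
  rw [mem_eigenspace_iff] at hv ⊢
  rw [← mul_apply, h, LinearMap.smul_apply, mul_apply, hv, map_smul, smul_smul]

lemma pow_apply_mem_eigenspace_of_mul_eq_smul_mul {A T : End K V} {r μ : K}
    (h : A * T = r • (T * A)) {v : V} (hv : v ∈ A.eigenspace μ) (j : ℕ) :
    (T ^ j) v ∈ A.eigenspace (r ^ j * μ) := by
  induction j with
  | zero => simpa using hv
  | succ j ih =>
    rw [pow_succ' T, mul_apply, pow_succ' r, mul_assoc]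
    exact apply_mem_eigenspace_of_mul_eq_smul_mul h ih

lemma exists_hasEigenvector_apply_eq_zero [FiniteDimensional K V] {A T : End K V} {r μ : K}
    (h : A * T = r • (T * A)) (hr0 : r ≠ 0) (hr : ¬IsOfFinOrder r) (hμ : μ ≠ 0) {v : V}
    (hv : A.HasEigenvector μ v) : ∃ (j : ℕ) (w : V), A.HasEigenvector (r ^ j * μ) w ∧ T w = 0 := by
  have hvanish : ∃ j, (T ^ j) v = 0 := by
    by_contra! hne
    have hinj : Function.Injective fun j : ℕ => r ^ j * μ := fun a b hab =>
      pow_injective_of_ne_zero_of_not_isOfFinOrder hr0 hr (mul_right_cancel₀ hμ hab)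
    refine Set.infinite_of_injective_forall_mem hinj (fun j => ?_) A.finite_hasEigenvalue
    exact hasEigenvalue_of_hasEigenvector
      ⟨pow_apply_mem_eigenspace_of_mul_eq_smul_mul h hv.1 j, hne j⟩
  obtain ⟨j, hj, hj1⟩ := Nat.exists_not_and_succ_of_not_zero_of_exists (by simpa using hv.2) hvanish
  refine ⟨j, (T ^ j) v, ⟨pow_apply_mem_eigenspace_of_mul_eq_smul_mul h hv.1 j, hj⟩, ?_⟩
  rwa [pow_succ', mul_apply] at hj1

end Module.End

lemma add_eq_one_of_sub_sq_add_eq_zero {K : Type*} [Field K] {a b c : K} (hab : a ≠ b)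
    (ha : a - a ^ 2 + c = 0) (hb : b - b ^ 2 + c = 0) : a + b = 1 := by
  have : (a - b) * (1 - (a + b)) = 0 := by linear_combination ha - hb
  rcases mul_eq_zero.1 this with h | h
  · exact absurd (sub_eq_zero.1 h) hab
  · linear_combination -h

lemma eq_neg_one_div_add_inv_sq_of_roots {K : Type*} [Field K] {x l c : K} (hx : x ≠ 0)
    (hne : l ≠ x ^ 2 * l) (hl : l - l ^ 2 + c = 0) (hxl : x ^ 2 * l - (x ^ 2 * l) ^ 2 + c = 0) :
    c = -1 / (x + x⁻¹) ^ 2 := by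
  have hsum := add_eq_one_of_sub_sq_add_eq_zero hne hl hxl
  have hinv : x + x⁻¹ = (x * l)⁻¹ :=
    eq_inv_of_mul_eq_one_left (by field_simp; linear_combination hsum)
  rw [hinv, inv_pow, div_inv_eq_mul]
  linear_combination hl + l * hsum

namespace PodlesRep

variable {V : Type*} [AddCommGroup V] [Module ℂ V] {q c : ℂ} {em e1 A : Module.End ℂ V}

lemma mul_e1 (h : PodlesRep q c em e1 A) (hq : q ≠ 0) : A * e1 = (q ^ 2)⁻¹ • (e1 * A) := by
  rw [h.2.2.1, smul_smul, inv_mul_cancel₀ (pow_ne_zero 2 hq), one_smul]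

lemma mul_em (h : PodlesRep q c em e1 A) (hq : q ≠ 0) : A * em = q ^ 2 • (em * A) := by
  rw [h.2.2.2, smul_smul, mul_inv_cancel₀ (pow_ne_zero 2 hq), one_smul]

lemma sub_sq_add_eq_zero_of_e1_eq_zero (h : PodlesRep q c em e1 A) {l : ℂ} {w : V}
    (hw : A.HasEigenvector l w) (he : e1 w = 0) : l - l ^ 2 + c = 0 := by
  have := LinearMap.congr_fun h.1 w
  simp only [Module.End.mul_apply, he, map_zero, LinearMap.add_apply, LinearMap.sub_apply,
    LinearMap.smul_apply, Module.End.one_apply, pow_two, hw.apply_eq_smul, map_smul,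
    smul_smul] at this
  exact (smul_eq_zero.1 (by linear_combination (norm := module) -this)).resolve_right hw.2

lemma sub_sq_add_eq_zero_of_em_eq_zero (h : PodlesRep q c em e1 A) {m : ℂ} {w : V}
    (hw : A.HasEigenvector m w) (he : em w = 0) : q ^ 2 * m - (q ^ 2 * m) ^ 2 + c = 0 := by
  have := LinearMap.congr_fun h.2.1 w
  simp only [Module.End.mul_apply, he, map_zero, LinearMap.add_apply, LinearMap.sub_apply,
    LinearMap.smul_apply, Module.End.one_apply, pow_two, hw.apply_eq_smul, map_smul,
    smul_smul] at this
  exact (smul_eq_zero.1 (by linear_combination (norm := module) -this)).resolve_right hw.2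

end PodlesRep

theorem stmt2 {V : Type*} [AddCommGroup V] [Module ℂ V] [FiniteDimensional ℂ V]
    (q : ℂ) (hq : q ≠ 0) (hq' : ∀ n : ℕ, 0 < n → q ^ n ≠ 1) (c : ℂ)
    (em e1 A : Module.End ℂ V) (hrep : PodlesRep q c em e1 A)
    (hc : ∀ n : ℕ, 1 ≤ n → c ≠ -1 / (q ^ n + (q ^ n)⁻¹) ^ 2) :
    IsNilpotent A := by
  have hq2 : q ^ 2 ≠ 0 := pow_ne_zero 2 hq
  have hq2_fin : ¬IsOfFinOrder (q ^ 2) := fun h => by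
    obtain ⟨n, hn, h1⟩ := isOfFinOrder_iff_pow_eq_one.1 h
    exact hq' (2 * n) (by omega) (by rwa [pow_mul])
  refine Module.End.isNilpotent_of_forall_hasEigenvalue_eq_zero fun μ hμ => by_contra fun hμ0 => ?_
  obtain ⟨v, hv⟩ := hμ.exists_hasEigenvector
  obtain ⟨j, w, hw, he1⟩ := Module.End.exists_hasEigenvector_apply_eq_zero (hrep.mul_e1 hq)
    (inv_ne_zero hq2) (not_isOfFinOrder_inv₀ hq2_fin) hμ0 hv
  set l := (q ^ 2)⁻¹ ^ j * μ
  have hl : l ≠ 0 := mul_ne_zero (pow_ne_zero _ (inv_ne_zero hq2)) hμ0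
  obtain ⟨n, w', hw', hem⟩ :=
    Module.End.exists_hasEigenvector_apply_eq_zero (hrep.mul_em hq) hq2 hq2_fin hl hw
  have hhigh := hrep.sub_sq_add_eq_zero_of_em_eq_zero hw' hem
  rw [show q ^ 2 * ((q ^ 2) ^ n * l) = (q ^ (n + 1)) ^ 2 * l by ring] at hhigh
  have hne : l ≠ (q ^ (n + 1)) ^ 2 * l := fun h =>
    hq' (2 * (n + 1)) (by omega) (by rw [pow_mul']; exact (mul_eq_right₀ hl).1 h.symm)
  exact hc (n + 1) (by omega) (eq_neg_one_div_add_inv_sq_of_roots (pow_ne_zero _ hq) hne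
    (hrep.sub_sq_add_eq_zero_of_e1_eq_zero hw he1) hhigh)
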